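/- Let A = A₁×…×A_n be an n-dimensional grid over ℝ, k ∈ {1,…,n}, a ∈ A_k, and let A⁻ = {x ∈ A : x_k ≤ a}, A⁺ = {x ∈ A : x_k ≥ a}. Let p⁻ and p⁺ be the unique Hermite interpolants on the grids A⁻ and A⁺ respectively, matching the same prescribed data t_a^m (values and partial derivatives up to orders ν(a)−1) on their respective grids. Then p⁻(x₁,…,x_{k−1}, a, x_{k+1},…,x_n) = p⁺(x₁,…,x_{k−1}, a, x_{k+1},…,x_n) identically; i.e., the two Hermite polynomials agree on the common hyperplane x_k = a, so they form a continuous spline. -/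

import Mathlib

open MvPolynomial

/-- The iterated mixed partial derivative operator `∂^m = ∂₁^{m₁} ⋯ ∂ₙ^{mₙ}` on
multivariate polynomials. -/
noncomputable def pd {K : Type*} [CommSemiring K] {n : ℕ} (m : Fin n → ℕ)
    (f : MvPolynomial (Fin n) K) : MvPolynomial (Fin n) K :=
  (List.finRange n).foldl (fun g i => (fun h => MvPolynomial.pderiv i h)^[m i] g) f

lemma coeff_pderiv {n : ℕ} (i : Fin n) (p : MvPolynomial (Fin n) ℝ) (m : Fin n →₀ ℕ) :
    coeff m (pderiv i p) = coeff (m + Finsupp.single i 1) p * ((m i : ℝ) + 1) := by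
  induction p using MvPolynomial.induction_on' with
  | add p q hp hq => simp [hp, hq, add_mul]
  | monomial s c =>
    rw [pderiv_monomial, coeff_monomial, coeff_monomial]
    by_cases h : s = m + Finsupp.single i 1
    · subst h
      rw [if_pos, if_pos rfl]
      · push_cast [Finsupp.add_apply, Finsupp.single_apply]
        simp
      · ext l
        simp [Finsupp.tsub_apply, Finsupp.add_apply, Finsupp.single_apply]
    · rw [if_neg h]
      by_cases h0 : s i = 0
      · split <;> simp [h0]
      · rw [if_neg, zero_mul]
        intro hc
        apply h
        rw [← hc]
        ext l
        rcases eq_or_ne l i with rfl | hl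
        · simp [Finsupp.tsub_apply, Finsupp.single_apply]
          omega
        · simp [Finsupp.tsub_apply, Finsupp.single_apply, hl.symm]

lemma degreeOf_pderiv_le {n : ℕ} (j i : Fin n) (p : MvPolynomial (Fin n) ℝ) :
    degreeOf j (pderiv i p) ≤ degreeOf j p := by
  rw [degreeOf_eq_sup, degreeOf_eq_sup, Finset.sup_le_iff]
  intro m hm
  rw [mem_support_iff, coeff_pderiv] at hm
  have h1 : coeff (m + Finsupp.single i 1) p ≠ 0 := fun h => hm (by simp [h])
  have h2 : m j ≤ ((m + Finsupp.single i 1 : Fin n →₀ ℕ)) j := by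
    rw [Finsupp.add_apply]; omega
  exact h2.trans (Finset.le_sup (f := fun (s : Fin n →₀ ℕ) => s j) (mem_support_iff.2 h1))

lemma pderiv_comm {n : ℕ} (i l : Fin n) (p : MvPolynomial (Fin n) ℝ) :
    pderiv i (pderiv l p) = pderiv l (pderiv i p) := by
  ext m
  rw [coeff_pderiv, coeff_pderiv, coeff_pderiv, coeff_pderiv, add_right_comm]
  rcases eq_or_ne i l with rfl | h
  · ring
  · have h1 : ((m + Finsupp.single i 1 : Fin n →₀ ℕ)) l = m l := by
      rw [Finsupp.add_apply, Finsupp.single_apply, if_neg h]; omega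
    have h2 : ((m + Finsupp.single l 1 : Fin n →₀ ℕ)) i = m i := by
      rw [Finsupp.add_apply, Finsupp.single_apply, if_neg h.symm]; omega
    rw [h1, h2]
    ring

lemma uni_hermite (B : Finset ℝ) (ν : ℝ → ℕ) (g : Polynomial ℝ)
    (hdeg : g.natDegree < ∑ c ∈ B, ν c)
    (hvan : ∀ c ∈ B, ∀ m < ν c, (Polynomial.derivative^[m] g).eval c = 0) : g = 0 := by
  by_contra hg
  have hdvd : ∀ c ∈ B, (Polynomial.X - Polynomial.C c) ^ (ν c) ∣ g := by
    intro c hc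
    rcases Nat.eq_zero_or_pos (ν c) with h0 | h0
    · simp [h0]
    · have h1 : ν c - 1 < g.rootMultiplicity c := by
        apply Polynomial.lt_rootMultiplicity_of_isRoot_iterate_derivative_of_mem_nonZeroDivisors hg
        · intro m hm
          exact hvan c hc m (by omega)
        · exact mem_nonZeroDivisors_of_ne_zero
            (Nat.cast_ne_zero.2 (Nat.factorial_ne_zero _))
      have h2 : ν c ≤ g.rootMultiplicity c := by omega
      exact (pow_dvd_pow _ h2).trans (g.pow_rootMultiplicity_dvd c)
  have hprod : (∏ c ∈ B, (Polynomial.X - Polynomial.C c) ^ ν c) ∣ g := by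
    apply Finset.prod_dvd_of_coprime _ hdvd
    intro c hc d hd hcd
    exact ((Polynomial.pairwise_coprime_X_sub_C (Function.injective_id) hcd).pow :
      IsCoprime ((Polynomial.X - Polynomial.C (id c)) ^ ν c) ((Polynomial.X - Polynomial.C (id d)) ^ ν d))
  have hdeg2 : (∏ c ∈ B, (Polynomial.X - Polynomial.C c) ^ ν c).natDegree = ∑ c ∈ B, ν c := by
    rw [Polynomial.natDegree_prod]
    · refine Finset.sum_congr rfl fun c _ => ?_
      rw [Polynomial.natDegree_pow, Polynomial.natDegree_X_sub_C, mul_one]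
    · intro c _
      exact pow_ne_zero _ (Polynomial.X_sub_C_ne_zero c)
  have := Polynomial.natDegree_le_of_dvd hprod hg
  omega

lemma cons_add_single_succ {n : ℕ} (m : Fin n →₀ ℕ) (j : ℕ) (i : Fin n) :
    m.cons j + Finsupp.single i.succ 1 = (m + Finsupp.single i 1).cons j := by
  ext l
  refine Fin.cases ?_ (fun l => ?_) l
  · simp [Finsupp.cons_zero, Finsupp.single_apply, Fin.succ_ne_zero]
  · simp [Finsupp.cons_succ, Finsupp.single_apply, Fin.succ_inj]

lemma cons_add_single_zero {n : ℕ} (m : Fin n →₀ ℕ) (j : ℕ) :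
    m.cons j + Finsupp.single (0 : Fin (n+1)) 1 = m.cons (j + 1) := by
  ext l
  refine Fin.cases ?_ (fun l => ?_) l
  · simp [Finsupp.cons_zero, Finsupp.single_apply]
  · simp [Finsupp.cons_succ, Finsupp.single_apply, (Fin.succ_ne_zero l).symm]

lemma fse_pderiv_succ {n : ℕ} (f : MvPolynomial (Fin (n+1)) ℝ) (i : Fin n) (j : ℕ) :
    (finSuccEquiv ℝ n (pderiv i.succ f)).coeff j = pderiv i ((finSuccEquiv ℝ n f).coeff j) := by
  ext m
  rw [finSuccEquiv_coeff_coeff, coeff_pderiv, coeff_pderiv, finSuccEquiv_coeff_coeff,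
    cons_add_single_succ]
  congr 2

lemma fse_pderiv_zero {n : ℕ} (f : MvPolynomial (Fin (n+1)) ℝ) :
    finSuccEquiv ℝ n (pderiv 0 f) = Polynomial.derivative (finSuccEquiv ℝ n f) := by
  apply Polynomial.ext
  intro j
  ext m
  rw [finSuccEquiv_coeff_coeff, coeff_pderiv, Polynomial.coeff_derivative,
    cons_add_single_zero, Finsupp.cons_zero]
  have h : ((j : MvPolynomial (Fin n) ℝ) + 1) = C ((j : ℝ) + 1) := by
    rw [map_add, map_one, map_natCast]
  rw [h, mul_comm _ (C ((j:ℝ)+1)), coeff_C_mul, finSuccEquiv_coeff_coeff]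
  ring

lemma fse_pderiv_succ_iter {n : ℕ} (t : ℕ) (f : MvPolynomial (Fin (n+1)) ℝ) (i : Fin n) (j : ℕ) :
    (finSuccEquiv ℝ n ((fun h => pderiv i.succ h)^[t] f)).coeff j
      = (fun h => pderiv i h)^[t] ((finSuccEquiv ℝ n f).coeff j) := by
  induction t generalizing f with
  | zero => rfl
  | succ t ih =>
    rw [Function.iterate_succ_apply, Function.iterate_succ_apply,
      ih ((pderiv i.succ) f), fse_pderiv_succ]

lemma fse_pderiv_zero_iter {n : ℕ} (t : ℕ) (f : MvPolynomial (Fin (n+1)) ℝ) :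
    finSuccEquiv ℝ n ((fun h => pderiv (0 : Fin (n+1)) h)^[t] f)
      = (Polynomial.derivative)^[t] (finSuccEquiv ℝ n f) := by
  induction t generalizing f with
  | zero => rfl
  | succ t ih =>
    rw [Function.iterate_succ_apply, Function.iterate_succ_apply,
      ih ((pderiv 0) f), fse_pderiv_zero]

lemma fse_foldl {n : ℕ} (m : Fin n → ℕ) (l : List (Fin n)) (f : MvPolynomial (Fin (n+1)) ℝ)
    (j : ℕ) :
    (finSuccEquiv ℝ n (l.foldl (fun g i => (fun h => pderiv i.succ h)^[m i] g) f)).coeff j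
      = l.foldl (fun g i => (fun h => pderiv i h)^[m i] g) ((finSuccEquiv ℝ n f).coeff j) := by
  induction l generalizing f with
  | nil => rfl
  | cons i l ih =>
    rw [List.foldl_cons, List.foldl_cons, ih, fse_pderiv_succ_iter]

lemma pderiv_zero_iter_foldl {n : ℕ} (m : Fin n → ℕ) (l : List (Fin n)) (t : ℕ)
    (f : MvPolynomial (Fin (n+1)) ℝ) :
    l.foldl (fun g i => (fun h => pderiv i.succ h)^[m i] g) ((fun h => pderiv (0:Fin (n+1)) h)^[t] f)
      = (fun h => pderiv (0:Fin (n+1)) h)^[t]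
          (l.foldl (fun g i => (fun h => pderiv i.succ h)^[m i] g) f) := by
  induction l generalizing f with
  | nil => rfl
  | cons i l ih =>
    rw [List.foldl_cons, List.foldl_cons, ← ih]
    congr 1
    exact ((Function.Commute.iterate_iterate
      (fun p => (pderiv_comm i.succ (0:Fin (n+1)) p)) (m i) t) f)

lemma degreeOf_zero_foldl_le {n : ℕ} (m : Fin n → ℕ) (l : List (Fin n))
    (f : MvPolynomial (Fin (n+1)) ℝ) :
    degreeOf 0 (l.foldl (fun g i => (fun h => pderiv i.succ h)^[m i] g) f) ≤ degreeOf 0 f := by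
  induction l generalizing f with
  | nil => exact le_refl _
  | cons i l ih =>
    rw [List.foldl_cons]
    refine (ih _).trans ?_
    clear ih
    induction m i generalizing f with
    | zero => exact le_refl _
    | succ t ih2 =>
      rw [Function.iterate_succ_apply]
      exact (ih2 _).trans (degreeOf_pderiv_le _ _ _)

lemma pd_succ {n : ℕ} (m : Fin (n+1) → ℕ) (f : MvPolynomial (Fin (n+1)) ℝ) :
    pd m f = (List.finRange n).foldl
        (fun g i => (fun h => pderiv i.succ h)^[m i.succ] g)
        ((fun h => pderiv (0 : Fin (n+1)) h)^[m 0] f) := by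
  rw [pd, List.finRange_succ, List.foldl_cons, List.foldl_map]

lemma mv_uniq : ∀ {n : ℕ} (B : Fin n → Finset ℝ) (ν : Fin n → ℝ → ℕ)
    (f : MvPolynomial (Fin n) ℝ),
    (∀ i, degreeOf i f < ∑ c ∈ B i, ν i c) →
    (∀ b : Fin n → ℝ, (∀ i, b i ∈ B i) → ∀ m : Fin n → ℕ, (∀ i, m i < ν i (b i)) →
      eval b (pd m f) = 0) → f = 0 := by
  intro n
  induction n with
  | zero =>
    intro B ν f _ hvan
    have h0 : eval (fun i : Fin 0 => i.elim0) f = 0 := by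
      have := hvan (fun i => i.elim0) (fun i => i.elim0) (fun i => i.elim0) (fun i => i.elim0)
      simpa [pd] using this
    rw [MvPolynomial.eq_C_of_isEmpty f] at h0 ⊢
    rw [eval_C] at h0
    rw [h0, map_zero]
  | succ n IH =>
    intro B ν f hdeg hvan
    have hq : finSuccEquiv ℝ n f = 0 := by
      apply Polynomial.ext
      intro j
      rw [Polynomial.coeff_zero]
      apply IH (fun i => B i.succ) (fun i c => ν i.succ c)
      · intro i
        exact lt_of_le_of_lt (degreeOf_coeff_finSuccEquiv f i j) (hdeg i.succ)
      · intro b' hb' m' hm'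
        -- the tail-differentiated polynomial
        set F : MvPolynomial (Fin (n+1)) ℝ := (List.finRange n).foldl
          (fun g i => (fun h => pderiv i.succ h)^[m' i] g) f with hF
        set g : Polynomial ℝ := (finSuccEquiv ℝ n F).map (eval b') with hg
        have hcoeff : ∀ j' : ℕ, g.coeff j' = eval b' (pd m' ((finSuccEquiv ℝ n f).coeff j')) := by
          intro j'
          rw [hg, Polynomial.coeff_map, hF, fse_foldl]
          rfl
        have hgzero : g = 0 := by
          apply uni_hermite (B 0) (ν 0)
          · calc g.natDegree ≤ (finSuccEquiv ℝ n F).natDegree := Polynomial.natDegree_map_le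
              _ = degreeOf 0 F := natDegree_finSuccEquiv F
              _ ≤ degreeOf 0 f := degreeOf_zero_foldl_le _ _ _
              _ < _ := hdeg 0
          · intro c hc m0 hm0
            have hder : Polynomial.derivative^[m0] g
                = (finSuccEquiv ℝ n ((fun h => pderiv (0:Fin (n+1)) h)^[m0] F)).map (eval b') := by
              rw [fse_pderiv_zero_iter, hg, Polynomial.iterate_derivative_map]
            have hpd : (fun h => pderiv (0:Fin (n+1)) h)^[m0] F = pd (Fin.cons m0 m') f := by
              rw [hF, ← pderiv_zero_iter_foldl, pd_succ]
              simp [Fin.cons_succ, Fin.cons_zero]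
            rw [hder, hpd, ← eval_eq_eval_mv_eval']
            apply hvan
            · intro i
              refine Fin.cases ?_ (fun i => ?_) i
              · simpa using hc
              · simpa using hb' i
            · intro i
              refine Fin.cases ?_ (fun i => ?_) i
              · simpa using hm0
              · simpa [Fin.cons_succ] using hm' i
        have := hcoeff j
        rw [hgzero, Polynomial.coeff_zero] at this
        exact this.symm
    have : f = (finSuccEquiv ℝ n).symm 0 := by
      rw [← hq, AlgEquiv.symm_apply_apply]
    rw [this, map_zero]

section subst
variable {n : ℕ}

lemma pderiv_aeval_Sb (k : Fin n) (a : ℝ) (i : Fin n) (hik : i ≠ k)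
    (p : MvPolynomial (Fin n) ℝ) :
    pderiv i (aeval (fun l => if l = k then C a else X l) p)
      = aeval (fun l => if l = k then C a else X l) (pderiv i p) := by
  set S : Fin n → MvPolynomial (Fin n) ℝ := fun l => if l = k then C a else X l with hS
  induction p using MvPolynomial.induction_on with
  | C r => simp [aeval_C]
  | add p q hp hq => simp only [map_add, hp, hq]
  | mul_X p l ih =>
    rw [map_mul, aeval_X, pderiv_mul, pderiv_mul, map_add, map_mul, map_mul, ih, aeval_X]
    congr 1
    have : pderiv i (S l) = aeval (R := ℝ) S (pderiv i (X l)) := by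
      rcases eq_or_ne l k with rfl | hlk
      · rw [hS]
        simp [pderiv_X_of_ne (Ne.symm hik)]
      · rw [hS]
        simp only [if_neg hlk]
        rcases eq_or_ne i l with rfl | hil
        · simp
        · simp [pderiv_X_of_ne (Ne.symm hil)]
    rw [this]

lemma iter_pderiv_aeval_Sb (k : Fin n) (a : ℝ) (i : Fin n) (hik : i ≠ k) (t : ℕ)
    (p : MvPolynomial (Fin n) ℝ) :
    (fun h => pderiv i h)^[t] (aeval (fun l => if l = k then C a else X l) p)
      = aeval (fun l => if l = k then C a else X l) ((fun h => pderiv i h)^[t] p) := by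
  induction t generalizing p with
  | zero => rfl
  | succ t ih =>
    rw [Function.iterate_succ_apply, Function.iterate_succ_apply,
      pderiv_aeval_Sb k a i hik, ih]

lemma pd_aeval_Sb (k : Fin n) (a : ℝ) (m : Fin n → ℕ) (hmk : m k = 0)
    (p : MvPolynomial (Fin n) ℝ) :
    pd m (aeval (fun l => if l = k then C a else X l) p)
      = aeval (fun l => if l = k then C a else X l) (pd m p) := by
  rw [pd, pd]
  have : ∀ (l : List (Fin n)) (q : MvPolynomial (Fin n) ℝ),
      l.foldl (fun g i => (fun h => pderiv i h)^[m i] g)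
          (aeval (fun l => if l = k then C a else X l) q)
        = aeval (fun l => if l = k then C a else X l)
          (l.foldl (fun g i => (fun h => pderiv i h)^[m i] g) q) := by
    intro l
    induction l with
    | nil => intro q; rfl
    | cons i l ih =>
      intro q
      rw [List.foldl_cons, List.foldl_cons, ← ih]
      congr 1
      rcases eq_or_ne i k with rfl | hik
      · rw [hmk]
        rfl
      · exact iter_pderiv_aeval_Sb k a i hik (m i) q
  exact this _ p

lemma pd_sub {n : ℕ} (m : Fin n → ℕ) (p q : MvPolynomial (Fin n) ℝ) :
    pd m (p - q) = pd m p - pd m q := by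
  rw [pd, pd, pd]
  have : ∀ (l : List (Fin n)) (p q : MvPolynomial (Fin n) ℝ),
      l.foldl (fun g i => (fun h => pderiv i h)^[m i] g) (p - q)
        = l.foldl (fun g i => (fun h => pderiv i h)^[m i] g) p
          - l.foldl (fun g i => (fun h => pderiv i h)^[m i] g) q := by
    intro l
    induction l with
    | nil => intro p q; rfl
    | cons i l ih =>
      intro p q
      rw [List.foldl_cons, List.foldl_cons, List.foldl_cons, ← ih]
      congr 1
      induction m i generalizing p q with
      | zero => rfl
      | succ t ih2 =>
        rw [Function.iterate_succ_apply, Function.iterate_succ_apply,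
          Function.iterate_succ_apply, map_sub, ih2]
  exact this _ p q

lemma eval_aeval_Sb (k : Fin n) (a : ℝ) (b : Fin n → ℝ) (p : MvPolynomial (Fin n) ℝ) :
    eval b (aeval (fun l => if l = k then C a else X l) p)
      = eval (fun l => if l = k then a else b l) p := by
  induction p using MvPolynomial.induction_on with
  | C r => simp [aeval_C]
  | add p q hp hq => simp only [map_add, hp, hq]
  | mul_X p l ih =>
    rw [map_mul, aeval_X, map_mul, ih, map_mul, eval_X]
    congr 1
    rcases eq_or_ne l k with rfl | hlk
    · simp
    · simp [if_neg hlk]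

end subst

section deg
variable {n : ℕ}

lemma aeval_Sb_monomial (k : Fin n) (a : ℝ) (s : Fin n →₀ ℕ) (c : ℝ) :
    aeval (fun l => if l = k then C a else X l) (monomial s c)
      = C (a ^ s k) * monomial (s.erase k) c := by
  have hsplit : monomial s c = monomial (Finsupp.single k (s k)) 1 * monomial (s.erase k) c := by
    rw [monomial_mul, one_mul, Finsupp.single_add_erase]
  rw [hsplit, map_mul]
  congr 1
  · rw [aeval_monomial, map_one, one_mul,
      Finsupp.prod_single_index (by rw [pow_zero])]
    rw [if_pos rfl, ← map_pow]
  · rw [aeval_monomial]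
    have hprod : ((s.erase k).prod fun l e => (fun l => if l = k then C a else X l) l ^ e)
        = ((s.erase k).prod fun l e => (X l : MvPolynomial (Fin n) ℝ) ^ e) := by
      apply Finsupp.prod_congr
      intro l hl
      have : l ≠ k := by
        have := Finsupp.support_erase (a := k) (f := s)
        rw [this] at hl
        exact (Finset.mem_erase.1 hl).1
      simp [this]
    rw [hprod, algebraMap_eq]
    exact monomial_eq.symm

lemma degreeOf_monomial_le (i : Fin n) (u : Fin n →₀ ℕ) (c : ℝ) :
    degreeOf i (monomial u c) ≤ u i := by
  by_cases hc : c = 0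
  · simp [hc]
  · rw [degreeOf_monomial_eq _ _ hc]

lemma degreeOf_aeval_Sb_le (k : Fin n) (a : ℝ) (i : Fin n) (p : MvPolynomial (Fin n) ℝ) :
    degreeOf i (aeval (fun l => if l = k then C a else X l) p) ≤ degreeOf i p := by
  conv_lhs => rw [as_sum p, map_sum]
  refine (degreeOf_sum_le _ _ _).trans (Finset.sup_le fun s hs => ?_)
  rw [aeval_Sb_monomial]
  refine (degreeOf_mul_le _ _ _).trans ?_
  have h1 : degreeOf i (C (a ^ s k) : MvPolynomial (Fin n) ℝ) = 0 := degreeOf_C _ _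
  have h2 : degreeOf i (monomial (s.erase k) (coeff s p)) ≤ s i := by
    refine (degreeOf_monomial_le _ _ _).trans ?_
    rw [Finsupp.erase_apply]
    split <;> omega
  have h3 : s i ≤ degreeOf i p := monomial_le_degreeOf i hs
  omega

lemma degreeOf_aeval_Sb_k (k : Fin n) (a : ℝ) (p : MvPolynomial (Fin n) ℝ) :
    degreeOf k (aeval (fun l => if l = k then C a else X l) p) = 0 := by
  refine Nat.le_zero.1 ?_
  conv_lhs => rw [as_sum p, map_sum]
  refine (degreeOf_sum_le _ _ _).trans (Finset.sup_le fun s hs => ?_)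
  rw [aeval_Sb_monomial]
  refine (degreeOf_mul_le _ _ _).trans ?_
  have h1 : degreeOf k (C (a ^ s k) : MvPolynomial (Fin n) ℝ) = 0 := degreeOf_C _ _
  have h2 : degreeOf k (monomial (s.erase k) (coeff s p)) ≤ 0 := by
    refine (degreeOf_monomial_le _ _ _).trans ?_
    rw [Finsupp.erase_apply, if_pos rfl]
  omega

lemma degreeOf_neg' (i : Fin n) (p : MvPolynomial (Fin n) ℝ) :
    degreeOf i (-p) = degreeOf i p := by
  rw [degreeOf_eq_sup, degreeOf_eq_sup, support_neg]

end deg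

/-- Continuity of Hermite splines on adjacent grids: let `A = A₁ × ⋯ × A_n`, let
`a ∈ A_k`, and let `pm`, `pp` be the Hermite interpolants on the sub-grids
`A⁻ = {x ∈ A : x_k ≤ a}` and `A⁺ = {x ∈ A : x_k ≥ a}` respectively, interpolating the
same data `t` (values and mixed partial derivatives up to orders `ν − 1`).
Then `pm` and `pp` agree identically on the common hyperplane `x_k = a`. -/
theorem stmt16 {n : ℕ} (A : Fin n → Finset ℝ) (ν : Fin n → ℝ → ℕ)
    (hν : ∀ i, ∀ c ∈ A i, 0 < ν i c) (k : Fin n) (a : ℝ) (ha : a ∈ A k)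
    (t : (Fin n → ℝ) → (Fin n → ℕ) → ℝ)
    (pm pp : MvPolynomial (Fin n) ℝ)
    (hpmdeg : ∀ i, degreeOf i pm <
      ∑ c ∈ (if i = k then (A k).filter (· ≤ a) else A i), ν i c)
    (hppdeg : ∀ i, degreeOf i pp <
      ∑ c ∈ (if i = k then (A k).filter (a ≤ ·) else A i), ν i c)
    (hpm : ∀ b : Fin n → ℝ, (∀ i, b i ∈ A i) → b k ≤ a →
      ∀ m : Fin n → ℕ, (∀ i, m i < ν i (b i)) → eval b (pd m pm) = t b m)
    (hpp : ∀ b : Fin n → ℝ, (∀ i, b i ∈ A i) → a ≤ b k →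
      ∀ m : Fin n → ℕ, (∀ i, m i < ν i (b i)) → eval b (pd m pp) = t b m) :
    ∀ x : Fin n → ℝ,
      eval (Function.update x k a) pm = eval (Function.update x k a) pp := by
  have hAm : ∀ i, degreeOf i pm < ∑ c ∈ A i, ν i c := by
    intro i
    refine lt_of_lt_of_le (hpmdeg i) ?_
    split
    · next h =>
      subst h
      exact Finset.sum_le_sum_of_subset (Finset.filter_subset _ _)
    · exact le_refl _
  have hAp : ∀ i, degreeOf i pp < ∑ c ∈ A i, ν i c := by
    intro i
    refine lt_of_lt_of_le (hppdeg i) ?_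
    split
    · next h =>
      subst h
      exact Finset.sum_le_sum_of_subset (Finset.filter_subset _ _)
    · exact le_refl _
  set S : Fin n → MvPolynomial (Fin n) ℝ := fun l => if l = k then C a else X l with hS
  have hq : aeval S pm - aeval S pp = 0 := by
    apply mv_uniq (fun i => if i = k then ({a} : Finset ℝ) else A i)
      (fun i c => if i = k then 1 else ν i c)
    · intro i
      have hsub : degreeOf i (aeval S pm - aeval S pp)
          ≤ max (degreeOf i (aeval S pm)) (degreeOf i (aeval S pp)) := by
        rw [sub_eq_add_neg]
        refine (degreeOf_add_le _ _ _).trans ?_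
        rw [degreeOf_neg']
      rcases eq_or_ne i k with rfl | hik
      · rw [if_pos rfl]
        have h1 : degreeOf i (aeval S pm) = 0 := degreeOf_aeval_Sb_k i a pm
        have h2 : degreeOf i (aeval S pp) = 0 := degreeOf_aeval_Sb_k i a pp
        rw [Finset.sum_singleton, if_pos rfl]
        omega
      · rw [if_neg hik]
        have h1 := (degreeOf_aeval_Sb_le k a i pm).trans_lt (hAm i)
        have h2 := (degreeOf_aeval_Sb_le k a i pp).trans_lt (hAp i)
        rw [← hS] at h1 h2
        have h3 : (∑ c ∈ A i, if i = k then 1 else ν i c) = ∑ c ∈ A i, ν i c := by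
          refine Finset.sum_congr rfl fun c _ => ?_
          rw [if_neg hik]
        rw [h3]
        omega
    · intro b hb m hm
      have hbk : b k = a := by
        have := hb k
        rw [if_pos rfl] at this
        simpa using this
      have hmk : m k = 0 := by
        have := hm k
        rw [if_pos rfl] at this
        omega
      rw [pd_sub, map_sub, pd_aeval_Sb k a m hmk, pd_aeval_Sb k a m hmk,
        eval_aeval_Sb, eval_aeval_Sb]
      have hbeq : (fun l => if l = k then a else b l) = b := by
        funext l
        split
        · next h => rw [h, hbk]
        · rfl
      rw [hbeq]
      have hbA : ∀ i, b i ∈ A i := by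
        intro i
        rcases eq_or_ne i k with rfl | hik
        · rw [hbk]; exact ha
        · have := hb i; rwa [if_neg hik] at this
      have hmν : ∀ i, m i < ν i (b i) := by
        intro i
        rcases eq_or_ne i k with rfl | hik
        · rw [hmk, hbk]; exact hν _ _ ha
        · have := hm i; rwa [if_neg hik] at this
      rw [hpm b hbA (le_of_eq hbk) m hmν, hpp b hbA (ge_of_eq hbk) m hmν, sub_self]
  intro x
  have h2 : aeval S pm = aeval S pp := sub_eq_zero.1 hq
  have h3 := congrArg (eval x) h2
  rw [hS] at h3
  rw [eval_aeval_Sb, eval_aeval_Sb] at h3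
  have hupd : Function.update x k a = fun l => if l = k then a else x l := by
    funext l
    exact Function.update_apply x k a l
  rw [hupd]
  exact h3
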